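/- Let p_s = ρ₀ * N(0, 2sI) for s ∈ [0, S], where ρ₀ is a mixture of Gaussians Σᵢ wᵢ N(μᵢ, σ²I). Then for every s ∈ [0,S], ∫ ‖∇ log p_s‖² dp_s ≤ d/(σ² + 2s), and consequently S ∫₀^S ‖∇ log p_s‖²_{L²(p_s)} ds ≤ (Sd/2) log(1 + 2S/σ²). -/

import Mathlib

/-!
The score of a Gaussian mixture is the posterior average of the component scores:
`∇ log p = p⁻¹ ∑ᵢ wᵢ φ_τ(x - μᵢ) τ⁻¹ (μᵢ - x)`. By Cauchy–Schwarz for this average,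
`‖∇ log p‖² p ≤ ∑ᵢ wᵢ φ_τ(x - μᵢ) ‖x - μᵢ‖² / τ²`, and the second moment `d τ` of `N(0, τ I)`
makes the right-hand side integrate to `d / τ`. With `τ = σ² + 2s`, integrating `d / (σ² + 2s)`
over `[0, S]` gives `(d / 2) log (1 + 2S / σ²)`.
-/

open MeasureTheory Real

/-- Density of the Gaussian mixture `Σᵢ wᵢ N(μᵢ, τ I)` on `ℝ^d`. -/
noncomputable def mixDensity (d N : ℕ) (w : Fin N → ℝ)
    (μ : Fin N → EuclideanSpace ℝ (Fin d)) (τ : ℝ)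
    (x : EuclideanSpace ℝ (Fin d)) : ℝ :=
  ∑ i, w i * ((2 * Real.pi * τ) ^ (-(d : ℝ) / 2) * Real.exp (-‖x - μ i‖ ^ 2 / (2 * τ)))

open InnerProductSpace Module

lemma integral_pow_mul_exp_neg_mul_sq_Ioi {b : ℝ} (hb : 0 < b) (m : ℕ) :
    ∫ y in Set.Ioi (0 : ℝ), y ^ m * rexp (-b * y ^ 2) =
      b ^ (-(m + 1 : ℝ) / 2) * (1 / 2) * Gamma ((m + 1 : ℝ) / 2) := by
  have h := integral_rpow_mul_exp_neg_mul_rpow two_pos (q := m)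
    (by linarith [(Nat.cast_nonneg m : (0 : ℝ) ≤ m)]) hb
  simp only [rpow_natCast, rpow_two] at h
  exact h

section GaussianMoment

variable {E : Type*} [NormedAddCommGroup E] [NormedSpace ℝ E] [FiniteDimensional ℝ E]
  [MeasurableSpace E] [BorelSpace E] (μ : Measure E) [μ.IsAddHaarMeasure] {b : ℝ}

lemma integrable_sq_norm_mul_exp_neg_mul_sq_norm (hb : 0 < b) :
    Integrable (fun x => ‖x‖ ^ 2 * rexp (-b * ‖x‖ ^ 2)) μ := by
  cases subsingleton_or_nontrivial E
  · simp [Subsingleton.elim _ (0 : E)]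
  rw [integrable_fun_norm_addHaar μ (f := fun y => y ^ 2 * rexp (-b * y ^ 2))]
  refine (integrableOn_rpow_mul_exp_neg_mul_sq hb (s := (finrank ℝ E + 1 : ℕ))
    (by linarith [(Nat.cast_nonneg _ : (0 : ℝ) ≤ (finrank ℝ E + 1 : ℕ))])).congr_fun
    (fun y _ => ?_) measurableSet_Ioi
  have := finrank_pos (R := ℝ) (M := E)
  show y ^ ((finrank ℝ E + 1 : ℕ) : ℝ) * _ = _
  rw [rpow_natCast, smul_eq_mul, ← mul_assoc, ← pow_add]
  congr 2
  omega

/-- In polar coordinates both sides are Gamma integrals, and `Γ(n/2 + 1) = (n/2) Γ(n/2)`. -/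
lemma integral_sq_norm_mul_exp_neg_mul_sq_norm (hb : 0 < b) :
    ∫ x, ‖x‖ ^ 2 * rexp (-b * ‖x‖ ^ 2) ∂μ =
      finrank ℝ E / (2 * b) * ∫ x, rexp (-b * ‖x‖ ^ 2) ∂μ := by
  cases subsingleton_or_nontrivial E
  · simp [Subsingleton.elim _ (0 : E), finrank_zero_of_subsingleton]
  obtain ⟨k, hk⟩ : ∃ k, finrank ℝ E = k + 1 := Nat.exists_eq_add_one.mpr finrank_pos
  rw [integral_fun_norm_addHaar μ (fun y => y ^ 2 * rexp (-b * y ^ 2)),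
    integral_fun_norm_addHaar μ (fun y => rexp (-b * y ^ 2))]
  simp only [smul_eq_mul, ← mul_assoc, ← pow_add]
  rw [integral_pow_mul_exp_neg_mul_sq_Ioi hb, integral_pow_mul_exp_neg_mul_sq_Ioi hb, hk,
    Nat.add_sub_cancel]
  push_cast
  rw [show ((k : ℝ) + 2 + 1) / 2 = (k + 1) / 2 + 1 by ring, Gamma_add_one (by positivity),
    show -((k : ℝ) + 2 + 1) / 2 = -((k + 1) / 2) + -1 by ring, rpow_add hb, rpow_neg_one]
  simp only [nsmul_eq_mul, neg_div]
  field_simp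

end GaussianMoment

section IsotropicGaussian

variable (V : Type*) [NormedAddCommGroup V] [InnerProductSpace ℝ V] {τ : ℝ}

noncomputable def isotropicGaussianPDF (τ : ℝ) (x : V) : ℝ :=
  (2 * π * τ) ^ (-(finrank ℝ V : ℝ) / 2) * rexp (-‖x‖ ^ 2 / (2 * τ))

variable {V}

lemma isotropicGaussianPDF_pos (hτ : 0 < τ) (x : V) : 0 < isotropicGaussianPDF V τ x := by
  unfold isotropicGaussianPDF
  have := rpow_pos_of_pos (by positivity : 0 < 2 * π * τ) (-(finrank ℝ V : ℝ) / 2)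
  positivity

lemma hasFDerivAt_isotropicGaussianPDF_sub [CompleteSpace V] (v x : V) :
    HasFDerivAt (fun z => isotropicGaussianPDF V τ (z - v))
      (toDual ℝ V ((τ⁻¹ * isotropicGaussianPDF V τ (x - v)) • (v - x))) x := by
  have h := ((((hasFDerivAt_id x).sub_const v).norm_sq.const_mul (-(2 * τ)⁻¹)).exp).const_mul
    ((2 * π * τ) ^ (-(finrank ℝ V : ℝ) / 2))
  have e : (fun z => isotropicGaussianPDF V τ (z - v)) = fun z =>
      (2 * π * τ) ^ (-(finrank ℝ V : ℝ) / 2) * rexp (-(2 * τ)⁻¹ * ‖id z - v‖ ^ 2) := by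
    ext z
    simp only [isotropicGaussianPDF, id]
    ring_nf
  rw [e]
  refine h.congr_fderiv ?_
  ext u
  simp only [mul_inv_rev, id_eq, neg_mul, map_sub, ContinuousLinearMap.comp_id, neg_smul,
    smul_neg, neg_apply, smul_apply, sub_apply, coe_innerSL_apply, nsmul_eq_mul, Nat.cast_ofNat,
    smul_eq_mul, isotropicGaussianPDF, map_smul, toDual_apply_apply]
  rw [show -‖x - v‖ ^ 2 / (2 * τ) = -(τ⁻¹ * 2⁻¹ * ‖x - v‖ ^ 2) by ring]
  ring

lemma sq_norm_mul_isotropicGaussianPDF (x : V) :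
    ‖x‖ ^ 2 * isotropicGaussianPDF V τ x =
      (2 * π * τ) ^ (-(finrank ℝ V : ℝ) / 2) * (‖x‖ ^ 2 * rexp (-(2 * τ)⁻¹ * ‖x‖ ^ 2)) := by
  rw [isotropicGaussianPDF, show -‖x‖ ^ 2 / (2 * τ) = -(2 * τ)⁻¹ * ‖x‖ ^ 2 by ring]
  ring

variable [FiniteDimensional ℝ V] [MeasurableSpace V] [BorelSpace V]

lemma integrable_sq_norm_mul_isotropicGaussianPDF (hτ : 0 < τ) :
    Integrable fun x : V => ‖x‖ ^ 2 * isotropicGaussianPDF V τ x := by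
  simp_rw [sq_norm_mul_isotropicGaussianPDF]
  exact (integrable_sq_norm_mul_exp_neg_mul_sq_norm volume (by positivity)).const_mul _

lemma integral_sq_norm_mul_isotropicGaussianPDF (hτ : 0 < τ) :
    ∫ x : V, ‖x‖ ^ 2 * isotropicGaussianPDF V τ x = finrank ℝ V * τ := by
  have hb : 0 < (2 * τ)⁻¹ := by positivity
  simp_rw [sq_norm_mul_isotropicGaussianPDF]
  rw [integral_const_mul, integral_sq_norm_mul_exp_neg_mul_sq_norm volume hb,
    GaussianFourier.integral_rexp_neg_mul_sq_norm hb, div_inv_eq_mul, ← mul_assoc π, mul_comm π 2,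
    neg_div, rpow_neg (by positivity)]
  have : (0 : ℝ) < (2 * π * τ) ^ (finrank ℝ V / 2 : ℝ) := by positivity
  field_simp

end IsotropicGaussian

lemma sq_norm_sum_smul_le {ι F : Type*} [SeminormedAddCommGroup F] [NormedSpace ℝ F]
    (s : Finset ι) {a : ι → ℝ} (ha : ∀ i ∈ s, 0 ≤ a i) (v : ι → F) :
    ‖∑ i ∈ s, a i • v i‖ ^ 2 ≤ (∑ i ∈ s, a i) * ∑ i ∈ s, a i * ‖v i‖ ^ 2 := by
  have triangle : ‖∑ i ∈ s, a i • v i‖ ≤ ∑ i ∈ s, a i * ‖v i‖ := by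
    refine (norm_sum_le _ _).trans (Finset.sum_le_sum fun i hi => ?_)
    rw [norm_smul, Real.norm_of_nonneg (ha i hi)]
  calc ‖∑ i ∈ s, a i • v i‖ ^ 2 ≤ (∑ i ∈ s, a i * ‖v i‖) ^ 2 :=
        pow_le_pow_left₀ (norm_nonneg _) triangle 2
    _ ≤ (∑ i ∈ s, a i) * ∑ i ∈ s, a i * ‖v i‖ ^ 2 :=
        Finset.sum_sq_le_sum_mul_sum_of_sq_le_mul s ha
          (fun i hi => mul_nonneg (ha i hi) (by positivity)) (fun i _ => (by ring : _ = _).le)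

section Mixture

variable {d N : ℕ} {w : Fin N → ℝ} {μ : Fin N → EuclideanSpace ℝ (Fin d)} {τ : ℝ}

local notation "E" => EuclideanSpace ℝ (Fin d)

lemma mixDensity_eq_sum :
    mixDensity d N w μ τ = fun x => ∑ i, w i * isotropicGaussianPDF E τ (x - μ i) := by
  ext x
  simp [mixDensity, isotropicGaussianPDF]

lemma mixDensity_pos (hτ : 0 < τ) (hw : ∀ i, 0 ≤ w i) (hsum : ∑ i, w i = 1) (x : E) :
    0 < mixDensity d N w μ τ x := by
  obtain ⟨i, -, hi⟩ : ∃ i ∈ Finset.univ, (0 : ℝ) < w i :=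
    Finset.exists_lt_of_sum_lt (by simp [hsum])
  rw [mixDensity_eq_sum]
  calc 0 < w i * isotropicGaussianPDF E τ (x - μ i) :=
        mul_pos hi (isotropicGaussianPDF_pos hτ _)
    _ ≤ _ := Finset.single_le_sum (f := fun i => w i * isotropicGaussianPDF E τ (x - μ i))
        (fun j _ => mul_nonneg (hw j) (isotropicGaussianPDF_pos hτ _).le) (Finset.mem_univ i)

lemma hasGradientAt_log_mixDensity {x : E} (hx : 0 < mixDensity d N w μ τ x) :
    HasGradientAt (fun z => log (mixDensity d N w μ τ z))
      ((mixDensity d N w μ τ x)⁻¹ •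
        ∑ i, (w i * isotropicGaussianPDF E τ (x - μ i)) • τ⁻¹ • (μ i - x)) x := by
  have hp : HasFDerivAt (mixDensity d N w μ τ)
      (toDual ℝ E (∑ i, w i • (τ⁻¹ * isotropicGaussianPDF E τ (x - μ i)) • (μ i - x))) x := by
    rw [mixDensity_eq_sum, map_sum]
    refine HasFDerivAt.fun_sum (u := Finset.univ)
      (A := fun i z => w i * isotropicGaussianPDF E τ (z - μ i)) fun i _ => ?_
    rw [map_smul]
    exact (hasFDerivAt_isotropicGaussianPDF_sub (μ i) x).const_mul (w i)
  have hscore : ∑ i, (w i * isotropicGaussianPDF E τ (x - μ i)) • τ⁻¹ • (μ i - x) =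
      ∑ i, w i • (τ⁻¹ * isotropicGaussianPDF E τ (x - μ i)) • (μ i - x) :=
    Finset.sum_congr rfl fun i _ => by module
  rw [hasGradientAt_iff_hasFDerivAt, map_smul, hscore]
  exact hp.log hx.ne'

lemma sq_norm_gradient_log_mixDensity_mul_le (hτ : 0 < τ) (hw : ∀ i, 0 ≤ w i)
    (hsum : ∑ i, w i = 1) (x : E) :
    ‖gradient (fun z => log (mixDensity d N w μ τ z)) x‖ ^ 2 * mixDensity d N w μ τ x ≤
      ∑ i, w i * (‖x - μ i‖ ^ 2 * isotropicGaussianPDF E τ (x - μ i)) / τ ^ 2 := by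
  have hp := mixDensity_pos (μ := μ) hτ hw hsum x
  set p := mixDensity d N w μ τ x
  have hp_eq : p = ∑ i, w i * isotropicGaussianPDF E τ (x - μ i) := by
    simp only [p, mixDensity_eq_sum]
  rw [(hasGradientAt_log_mixDensity hp).gradient, norm_smul, mul_pow, norm_inv,
    Real.norm_of_nonneg hp.le]
  calc (p⁻¹ ^ 2 * ‖∑ i, (w i * isotropicGaussianPDF E τ (x - μ i)) • τ⁻¹ • (μ i - x)‖ ^ 2) * p
      ≤ (p⁻¹ ^ 2 * (p * ∑ i, (w i * isotropicGaussianPDF E τ (x - μ i)) *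
          ‖τ⁻¹ • (μ i - x)‖ ^ 2)) * p := by
        gcongr
        rw [hp_eq]
        exact sq_norm_sum_smul_le _
          (fun i _ => mul_nonneg (hw i) (isotropicGaussianPDF_pos hτ _).le) _
    _ = ∑ i, (w i * isotropicGaussianPDF E τ (x - μ i)) * ‖τ⁻¹ • (μ i - x)‖ ^ 2 := by
        field_simp
    _ = _ := by
        refine Finset.sum_congr rfl fun i _ => ?_
        rw [norm_smul, norm_inv, Real.norm_of_nonneg hτ.le, norm_sub_rev]
        field_simp

lemma integral_sq_norm_gradient_log_mixDensity_mul_le (hτ : 0 < τ) (hw : ∀ i, 0 ≤ w i)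
    (hsum : ∑ i, w i = 1) :
    ∫ x, ‖gradient (fun z => log (mixDensity d N w μ τ z)) x‖ ^ 2 * mixDensity d N w μ τ x ≤
      d / τ := by
  have hterm : ∀ i, Integrable fun x : E =>
      w i * (‖x - μ i‖ ^ 2 * isotropicGaussianPDF E τ (x - μ i)) / τ ^ 2 := fun i =>
    ((integrable_sq_norm_mul_isotropicGaussianPDF hτ).comp_sub_right (μ i)).const_mul _
      |>.div_const _
  calc _ ≤ ∫ x, ∑ i, w i * (‖x - μ i‖ ^ 2 * isotropicGaussianPDF E τ (x - μ i)) / τ ^ 2 :=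
        integral_mono_of_nonneg
          (.of_forall fun x => by have := mixDensity_pos (μ := μ) hτ hw hsum x; positivity)
          (integrable_finsetSum _ fun i _ => hterm i)
          (.of_forall (sq_norm_gradient_log_mixDensity_mul_le hτ hw hsum))
    _ = d / τ := by
        rw [integral_finsetSum _ fun i _ => hterm i]
        simp_rw [integral_div, integral_const_mul]
        simp only [integral_sub_right_eq_self (fun x : E => ‖x‖ ^ 2 * isotropicGaussianPDF E τ x),
          integral_sq_norm_mul_isotropicGaussianPDF hτ, finrank_euclideanSpace_fin]
        rw [← Finset.sum_div, ← Finset.sum_mul, hsum]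
        field_simp

end Mixture

lemma integral_inv_add_mul {a b S : ℝ} (ha : 0 < a) (hb : 0 < b) (hS : 0 ≤ S) :
    ∫ s in (0 : ℝ)..S, (a + b * s)⁻¹ = b⁻¹ * log ((a + b * S) / a) := by
  have h := intervalIntegral.integral_comp_mul_add (fun s => s⁻¹) hb.ne' a (a := 0) (b := S)
  simp only [mul_zero, zero_add] at h
  rw [show (fun s => (a + b * s)⁻¹) = fun s => (b * s + a)⁻¹ by ext; ring_nf, h,
    integral_inv_of_pos ha (by positivity), smul_eq_mul, add_comm]

lemma intervalIntegrable_inv_add_mul {a b S : ℝ} (ha : 0 < a) (hb : 0 ≤ b) (hS : 0 ≤ S) :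
    IntervalIntegrable (fun s => (a + b * s)⁻¹) volume 0 S := by
  refine ContinuousOn.intervalIntegrable (ContinuousOn.inv₀ (by fun_prop) fun s hs => ?_)
  rw [Set.uIcc_of_le hS] at hs
  nlinarith [hs.1]

/-- No integrability of `f` is needed: otherwise its integral is the junk value `0`. -/
lemma intervalIntegral_mono_on_of_nonneg {f g : ℝ → ℝ} {a b : ℝ} (hab : a ≤ b)
    (hg : IntervalIntegrable g volume a b) (hg0 : ∀ x ∈ Set.Icc a b, 0 ≤ g x)
    (hfg : ∀ x ∈ Set.Icc a b, f x ≤ g x) :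
    ∫ x in a..b, f x ≤ ∫ x in a..b, g x := by
  by_cases hf : IntervalIntegrable f volume a b
  · exact intervalIntegral.integral_mono_on hab hf hg hfg
  · rw [intervalIntegral.integral_undef hf]
    exact intervalIntegral.integral_nonneg hab hg0

theorem stmt_19_general (d N : ℕ) (σ S : ℝ) (hσ : 0 < σ) (hS : 0 < S)
    (w : Fin N → ℝ) (hw : ∀ i, 0 < w i) (hsum : ∑ i, w i = 1)
    (μ : Fin N → EuclideanSpace ℝ (Fin d)) :
    (∀ s ∈ Set.Icc (0:ℝ) S,
      (∫ x, ‖gradient (fun z => Real.log (mixDensity d N w μ (σ ^ 2 + 2 * s) z)) x‖ ^ 2 *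
          mixDensity d N w μ (σ ^ 2 + 2 * s) x) ≤ d / (σ ^ 2 + 2 * s)) ∧
    S * (∫ s in (0:ℝ)..S,
        ∫ x, ‖gradient (fun z => Real.log (mixDensity d N w μ (σ ^ 2 + 2 * s) z)) x‖ ^ 2 *
          mixDensity d N w μ (σ ^ 2 + 2 * s) x) ≤
      (S * d / 2) * Real.log (1 + 2 * S / σ ^ 2) := by
  have hτ : ∀ s ∈ Set.Icc (0 : ℝ) S, 0 < σ ^ 2 + 2 * s := fun s hs => by
    nlinarith [hs.1, pow_pos hσ 2]
  have fisher : ∀ s ∈ Set.Icc (0 : ℝ) S, _ ≤ d / (σ ^ 2 + 2 * s) := fun s hs =>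
    integral_sq_norm_gradient_log_mixDensity_mul_le (μ := μ) (hτ s hs) (fun i => (hw i).le) hsum
  refine ⟨fisher, ?_⟩
  calc _ ≤ S * ∫ s in (0 : ℝ)..S, (d : ℝ) * (σ ^ 2 + 2 * s)⁻¹ := by
        gcongr
        refine intervalIntegral_mono_on_of_nonneg hS.le
          ((intervalIntegrable_inv_add_mul (pow_pos hσ 2) zero_le_two hS.le).const_mul _)
          (fun s hs => by have := hτ s hs; positivity)
          (fun s hs => (fisher s hs).trans_eq (div_eq_mul_inv _ _))
    _ = S * d / 2 * log (1 + 2 * S / σ ^ 2) := by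
        rw [intervalIntegral.integral_const_mul,
          integral_inv_add_mul (pow_pos hσ 2) two_pos hS.le, add_div, div_self (by positivity)]
        ring

/-- For `p_s = ρ₀ * N(0, 2sI)` with `ρ₀ = Σᵢ wᵢ N(μᵢ, σ²I)` (so
`p_s = Σᵢ wᵢ N(μᵢ, (σ²+2s)I)`): for all `s ∈ [0,S]`,
`∫‖∇ log p_s‖² dp_s ≤ d/(σ²+2s)`, and hence
`S ∫₀^S ‖∇ log p_s‖²_{L²(p_s)} ds ≤ (Sd/2) log(1 + 2S/σ²)`. -/
theorem stmt_19 (d N : ℕ) (hN : 0 < N) (σ S : ℝ) (hσ : 0 < σ) (hS : 0 < S)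
    (w : Fin N → ℝ) (hw : ∀ i, 0 < w i) (hsum : ∑ i, w i = 1)
    (μ : Fin N → EuclideanSpace ℝ (Fin d)) :
    (∀ s ∈ Set.Icc (0:ℝ) S,
      (∫ x, ‖gradient (fun z => Real.log (mixDensity d N w μ (σ ^ 2 + 2 * s) z)) x‖ ^ 2 *
          mixDensity d N w μ (σ ^ 2 + 2 * s) x) ≤ d / (σ ^ 2 + 2 * s)) ∧
    S * (∫ s in (0:ℝ)..S,
        ∫ x, ‖gradient (fun z => Real.log (mixDensity d N w μ (σ ^ 2 + 2 * s) z)) x‖ ^ 2 *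
          mixDensity d N w μ (σ ^ 2 + 2 * s) x) ≤
      (S * d / 2) * Real.log (1 + 2 * S / σ ^ 2) :=
  stmt_19_general d N σ S hσ hS w hw hsum μ
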